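/- Let V be a multiplicative partial isometry on H and set A^R = span{(ω⊗id)(V*V) : ω ∈ L(H)*}. Then every element a^R ∈ A^R satisfies (1⊗a^R)V = V(a^R⊗1); consequently A^R commutes elementwise with the algebra C(V) = span{(id⊗ω)(ΣV) : ω ∈ L(H)*}. -/
import Mathlib


open Matrix

namespace MPIpaper

variable {n : Type*} [Fintype n] [DecidableEq n]

noncomputable section

/-- `W₁₂ = W ⊗ 1` on `H ⊗ H ⊗ H`. -/
def leg12 (V : Matrix (n × n) (n × n) ℂ) : Matrix (n × n × n) (n × n × n) ℂ :=
  Matrix.of fun p q => V (p.1, p.2.1) (q.1, q.2.1) * (if p.2.2 = q.2.2 then (1 : ℂ) else 0)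

/-- `W₂₃ = 1 ⊗ W` on `H ⊗ H ⊗ H`. -/
def leg23 (V : Matrix (n × n) (n × n) ℂ) : Matrix (n × n × n) (n × n × n) ℂ :=
  Matrix.of fun p q => (if p.1 = q.1 then (1 : ℂ) else 0) * V p.2 q.2

/-- `W₁₃ = (1⊗Σ)(W⊗1)(1⊗Σ)` on `H ⊗ H ⊗ H`. -/
def leg13 (V : Matrix (n × n) (n × n) ℂ) : Matrix (n × n × n) (n × n × n) ℂ :=
  Matrix.of fun p q => V (p.1, p.2.2) (q.1, q.2.2) * (if p.2.1 = q.2.1 then (1 : ℂ) else 0)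

/-- A multiplicative partial isometry: `VV*V = V`, the pentagon equation, and the
three auxiliary (hexagon-type) equations. -/
def IsMPI (V : Matrix (n × n) (n × n) ℂ) : Prop :=
  V * Vᴴ * V = V ∧
  leg23 V * leg12 V = leg12 V * leg13 V * leg23 V ∧
  leg13 V * leg23 V * (leg23 V)ᴴ = (leg12 V)ᴴ * leg12 V * leg13 V ∧
  leg12 V * (leg12 V)ᴴ * leg23 V = leg23 V * leg12 V * (leg12 V)ᴴ ∧
  leg12 V * (leg23 V)ᴴ * leg23 V = (leg23 V)ᴴ * leg23 V * leg12 V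

/-- `λ(ω) = (ω ⊗ id)(V)`. -/
def lam (ω : Matrix n n ℂ →ₗ[ℂ] ℂ) (V : Matrix (n × n) (n × n) ℂ) : Matrix n n ℂ :=
  Matrix.of fun i j => ω (Matrix.of fun a b => V (a, i) (b, j))

/-- `ρ(ω) = (id ⊗ ω)(V)`. -/
def rho (ω : Matrix n n ℂ →ₗ[ℂ] ℂ) (V : Matrix (n × n) (n × n) ℂ) : Matrix n n ℂ :=
  Matrix.of fun i j => ω (Matrix.of fun a b => V (i, a) (j, b))

/-- `1 ⊗ X` on `H ⊗ H`. -/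
def oneTensor (X : Matrix n n ℂ) : Matrix (n × n) (n × n) ℂ :=
  Matrix.of fun p q => (if p.1 = q.1 then (1 : ℂ) else 0) * X p.2 q.2

/-- `X ⊗ 1` on `H ⊗ H`. -/
def tensorOne (X : Matrix n n ℂ) : Matrix (n × n) (n × n) ℂ :=
  Matrix.of fun p q => X p.1 q.1 * (if p.2 = q.2 then (1 : ℂ) else 0)

/-- `Δ(X) = V (X ⊗ 1) V*`. -/
def Delta (V : Matrix (n × n) (n × n) ℂ) (X : Matrix n n ℂ) : Matrix (n × n) (n × n) ℂ :=
  V * tensorOne X * Vᴴ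

/-- `Δ̂(X) = V* (1 ⊗ X) V`. -/
def hatDelta (V : Matrix (n × n) (n × n) ℂ) (X : Matrix n n ℂ) : Matrix (n × n) (n × n) ℂ :=
  Vᴴ * oneTensor X * V

/-- `(ω ⊗ ω')(W)` for an operator `W` on `H ⊗ H`. -/
def applyBoth (ω ω' : Matrix n n ℂ →ₗ[ℂ] ℂ) (W : Matrix (n × n) (n × n) ℂ) : ℂ :=
  ω (Matrix.of fun i j => ω' (Matrix.of fun k l => W (i, k) (j, l)))

end

/-- The flip operator `Σ` on `H ⊗ H`. -/
noncomputable def flipMat : Matrix (n × n) (n × n) ℂ :=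
  Matrix.of fun p q => if p.1 = q.2 ∧ p.2 = q.1 then (1 : ℂ) else 0

/-- `C(V) = span { (id ⊗ ω)(ΣV) | ω ∈ L(H)* }`. -/
noncomputable def CV (V : Matrix (n × n) (n × n) ℂ) : Submodule ℂ (Matrix n n ℂ) :=
  Submodule.span ℂ (Set.range (fun ω : Matrix n n ℂ →ₗ[ℂ] ℂ => rho ω (flipMat * V)))

/-- `A^R = span { (ω ⊗ id)(V*V) | ω ∈ L(H)* }`. -/
noncomputable def AR (V : Matrix (n × n) (n × n) ℂ) : Submodule ℂ (Matrix n n ℂ) :=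
  Submodule.span ℂ (Set.range (fun ω : Matrix n n ℂ →ₗ[ℂ] ℂ => lam ω (Vᴴ * V)))


section Aux
set_option linter.unusedSectionVars false

lemma leg12_mul (A B : Matrix (n × n) (n × n) ℂ) : leg12 (A * B) = leg12 A * leg12 B := by
  ext ⟨p1, p2, p3⟩ ⟨q1, q2, q3⟩
  simp [leg12, Matrix.mul_apply, Fintype.sum_prod_type, mul_ite, ite_mul,
    Finset.mul_sum, Finset.sum_mul]

lemma leg23_mul (A B : Matrix (n × n) (n × n) ℂ) : leg23 (A * B) = leg23 A * leg23 B := by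
  ext ⟨p1, p2, p3⟩ ⟨q1, q2, q3⟩
  simp [leg23, Matrix.mul_apply, Fintype.sum_prod_type, mul_ite, ite_mul,
    Finset.mul_sum, Finset.sum_mul]

lemma leg13_mul (A B : Matrix (n × n) (n × n) ℂ) : leg13 (A * B) = leg13 A * leg13 B := by
  ext ⟨p1, p2, p3⟩ ⟨q1, q2, q3⟩
  simp [leg13, Matrix.mul_apply, Fintype.sum_prod_type, mul_ite, ite_mul,
    Finset.mul_sum, Finset.sum_mul]

lemma leg12_conj (A : Matrix (n × n) (n × n) ℂ) : leg12 Aᴴ = (leg12 A)ᴴ := by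
  ext ⟨p1, p2, p3⟩ ⟨q1, q2, q3⟩
  by_cases h : p3 = q3 <;> simp [leg12, Matrix.conjTranspose_apply, h, eq_comm]

lemma leg23_conj (A : Matrix (n × n) (n × n) ℂ) : leg23 Aᴴ = (leg23 A)ᴴ := by
  ext ⟨p1, p2, p3⟩ ⟨q1, q2, q3⟩
  by_cases h : p1 = q1 <;> simp [leg23, Matrix.conjTranspose_apply, h, eq_comm]

lemma leg13_conj (A : Matrix (n × n) (n × n) ℂ) : leg13 Aᴴ = (leg13 A)ᴴ := by
  ext ⟨p1, p2, p3⟩ ⟨q1, q2, q3⟩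
  by_cases h : p2 = q2 <;> simp [leg13, Matrix.conjTranspose_apply, h, eq_comm]

lemma derived_key {M : Type*} [Monoid M] (X Y Z Xs Ys Zs : M)
    (hX : X * Xs * X = X) (hY : Y * Ys * Y = Y)
    (pent : Y * X = X * Z * Y)
    (pents : Xs * Ys = Ys * Zs * Xs)
    (a3 : Z * Y * Ys = Xs * X * Z)
    (a3s : Y * Ys * Zs = Zs * Xs * X)
    (a5s : Ys * Y * Xs = Xs * (Ys * Y)) :
    Zs * Z * Y = Y * (Xs * X) := by
  symm
  calc Y * (Xs * X) = (Y * Ys * Y) * (Xs * X) := by rw [hY]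
    _ = Y * (Ys * Y * Xs) * X := by simp only [mul_assoc]
    _ = Y * (Xs * (Ys * Y)) * X := by rw [a5s]
    _ = Y * Xs * (Ys * (Y * X)) := by simp only [mul_assoc]
    _ = Y * Xs * (Ys * (X * Z * Y)) := by rw [pent]
    _ = Y * (Xs * Ys) * (X * (Z * Y)) := by simp only [mul_assoc]
    _ = Y * (Ys * Zs * Xs) * (X * (Z * Y)) := by rw [pents]
    _ = (Y * Ys * Zs) * (Xs * X) * (Z * Y) := by simp only [mul_assoc]
    _ = (Zs * Xs * X) * (Xs * X) * (Z * Y) := by rw [a3s]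
    _ = Zs * (Xs * (X * Xs * X)) * (Z * Y) := by simp only [mul_assoc]
    _ = Zs * (Xs * X) * (Z * Y) := by rw [hX]
    _ = Zs * (Xs * X * Z) * Y := by simp only [mul_assoc]
    _ = Zs * (Z * Y * Ys) * Y := by rw [a3]
    _ = Zs * Z * (Y * Ys * Y) := by simp only [mul_assoc]
    _ = Zs * Z * Y := by rw [hY]

lemma key_mat (V : Matrix (n × n) (n × n) ℂ) (hV : IsMPI V) :
    leg13 (Vᴴ * V) * leg23 V = leg23 V * leg12 (Vᴴ * V) := by
  obtain ⟨h1, pent, a3, _a4, a5⟩ := hV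
  have hX : leg12 V * (leg12 V)ᴴ * leg12 V = leg12 V := by
    rw [← leg12_conj, ← leg12_mul, ← leg12_mul, h1]
  have hY : leg23 V * (leg23 V)ᴴ * leg23 V = leg23 V := by
    rw [← leg23_conj, ← leg23_mul, ← leg23_mul, h1]
  have pents : (leg12 V)ᴴ * (leg23 V)ᴴ = (leg23 V)ᴴ * (leg13 V)ᴴ * (leg12 V)ᴴ := by
    have := congrArg conjTranspose pent
    simpa [Matrix.conjTranspose_mul, mul_assoc] using this
  have a3s : leg23 V * (leg23 V)ᴴ * (leg13 V)ᴴ = (leg13 V)ᴴ * (leg12 V)ᴴ * leg12 V := by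
    have := congrArg conjTranspose a3
    simpa [Matrix.conjTranspose_mul, mul_assoc] using this
  have a5s : (leg23 V)ᴴ * leg23 V * (leg12 V)ᴴ = (leg12 V)ᴴ * ((leg23 V)ᴴ * leg23 V) := by
    have := congrArg conjTranspose a5
    simpa [Matrix.conjTranspose_mul, mul_assoc] using this
  have key := derived_key (leg12 V) (leg23 V) (leg13 V) (leg12 V)ᴴ (leg23 V)ᴴ (leg13 V)ᴴ
    hX hY pent pents a3 ?_ a5s
  · rw [leg13_mul, leg13_conj, leg12_mul, leg12_conj, ← mul_assoc]
    simpa [mul_assoc] using key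
  · simpa [mul_assoc] using a3s

lemma key_entry (V : Matrix (n × n) (n × n) ℂ) (hV : IsMPI V)
    (p i k q j l : n) :
    ∑ c, (Vᴴ * V) (p, k) (q, c) * V (i, c) (j, l)
      = ∑ b, V (i, k) (b, l) * (Vᴴ * V) (p, b) (q, j) := by
  have h := key_mat V hV
  have h2 := congrArg (fun M => M (p, i, k) (q, j, l)) h
  simpa [leg13, leg23, leg12, Matrix.mul_apply, Fintype.sum_prod_type, mul_ite, ite_mul,
    Finset.mul_sum, Finset.sum_mul] using h2

lemma oneTensor_mul_apply (X : Matrix n n ℂ) (W : Matrix (n × n) (n × n) ℂ)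
    (i k j l : n) :
    (oneTensor X * W) (i, k) (j, l) = ∑ m, X k m * W (i, m) (j, l) := by
  rw [Matrix.mul_apply, Fintype.sum_prod_type]
  simp [oneTensor, ite_mul, mul_assoc]

lemma mul_tensorOne_apply (W : Matrix (n × n) (n × n) ℂ) (X : Matrix n n ℂ)
    (i k j l : n) :
    (W * tensorOne X) (i, k) (j, l) = ∑ m, W (i, k) (m, l) * X m j := by
  rw [Matrix.mul_apply, Fintype.sum_prod_type]
  simp only [tensorOne, Matrix.of_apply, mul_ite, mul_one, mul_zero, ← mul_assoc]
  rw [Finset.sum_comm]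
  simp [mul_ite]

lemma part1_gen (V : Matrix (n × n) (n × n) ℂ) (hV : IsMPI V)
    (ω : Matrix n n ℂ →ₗ[ℂ] ℂ) :
    oneTensor (lam ω (Vᴴ * V)) * V = V * tensorOne (lam ω (Vᴴ * V)) := by
  have key := key_entry V hV
  set E := Vᴴ * V with hE
  ext ⟨i, k⟩ ⟨j, l⟩
  rw [oneTensor_mul_apply, mul_tensorOne_apply]
  have L : ∑ m, (lam ω E) k m * V (i, m) (j, l)
      = ω (∑ m, V (i, m) (j, l) • Matrix.of fun p q => E (p, k) (q, m)) := by
    rw [map_sum]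
    refine Finset.sum_congr rfl fun m _ => ?_
    rw [_root_.map_smul, smul_eq_mul, mul_comm]
    rfl
  have R : ∑ m, V (i, k) (m, l) * (lam ω E) m j
      = ω (∑ m, V (i, k) (m, l) • Matrix.of fun p q => E (p, m) (q, j)) := by
    rw [map_sum]
    refine Finset.sum_congr rfl fun m _ => ?_
    rw [_root_.map_smul, smul_eq_mul]
    rfl
  rw [L, R]
  congr 1
  ext p q
  simp only [Matrix.sum_apply, Matrix.smul_apply, Matrix.of_apply, smul_eq_mul]
  calc ∑ m, V (i, m) (j, l) * E (p, k) (q, m)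
      = ∑ m, E (p, k) (q, m) * V (i, m) (j, l) :=
        Finset.sum_congr rfl fun m _ => mul_comm _ _
    _ = ∑ m, V (i, k) (m, l) * E (p, m) (q, j) := key p i k q j l

lemma flip_mul_apply (V : Matrix (n × n) (n × n) ℂ) (j p l q : n) :
    ((flipMat * V : Matrix (n × n) (n × n) ℂ)) (j, p) (l, q) = V (p, j) (l, q) := by
  rw [Matrix.mul_apply, Fintype.sum_prod_type]
  simp [flipMat, ite_mul, ite_and]

lemma rho_flip (V : Matrix (n × n) (n × n) ℂ) (ω : Matrix n n ℂ →ₗ[ℂ] ℂ) (m l : n) :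
    rho ω (flipMat * V) m l = ω (Matrix.of fun p q => V (p, m) (l, q)) := by
  simp only [rho, Matrix.of_apply]
  congr 1
  ext p q
  simp only [Matrix.of_apply]
  exact flip_mul_apply V m p l q

lemma part2_gen (V : Matrix (n × n) (n × n) ℂ) (a : Matrix n n ℂ)
    (h : oneTensor a * V = V * tensorOne a) (ω : Matrix n n ℂ →ₗ[ℂ] ℂ) :
    a * rho ω (flipMat * V) = rho ω (flipMat * V) * a := by
  have key : ∀ p k l q : n,
      ∑ m, a k m * V (p, m) (l, q) = ∑ m, V (p, k) (m, q) * a m l := by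
    intro p k l q
    have := congrArg (fun M => M (p, k) (l, q)) h
    simpa [oneTensor_mul_apply, mul_tensorOne_apply] using this
  ext k l
  rw [Matrix.mul_apply, Matrix.mul_apply]
  have L : ∑ m, a k m * rho ω (flipMat * V) m l
      = ω (∑ m, a k m • Matrix.of fun p q => V (p, m) (l, q)) := by
    rw [map_sum]
    refine Finset.sum_congr rfl fun m _ => ?_
    rw [rho_flip, _root_.map_smul, smul_eq_mul]
  have R : ∑ m, rho ω (flipMat * V) k m * a m l
      = ω (∑ m, a m l • Matrix.of fun p q => V (p, k) (m, q)) := by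
    rw [map_sum]
    refine Finset.sum_congr rfl fun m _ => ?_
    rw [rho_flip, _root_.map_smul, smul_eq_mul, mul_comm]
  rw [L, R]
  congr 1
  ext p q
  simp only [Matrix.sum_apply, Matrix.smul_apply, Matrix.of_apply, smul_eq_mul]
  calc ∑ m, a k m * V (p, m) (l, q) = ∑ m, V (p, k) (m, q) * a m l := key p k l q
    _ = ∑ m, a m l * V (p, k) (m, q) := Finset.sum_congr rfl fun m _ => mul_comm _ _

lemma oneTensor_add (x y : Matrix n n ℂ) : oneTensor (x + y) = oneTensor x + oneTensor y := by
  ext p q; simp [oneTensor, mul_add]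

lemma oneTensor_smul (r : ℂ) (x : Matrix n n ℂ) : oneTensor (r • x) = r • oneTensor x := by
  ext p q; simp [oneTensor]

lemma oneTensor_zero : oneTensor (0 : Matrix n n ℂ) = 0 := by
  ext p q; simp [oneTensor]

lemma tensorOne_add (x y : Matrix n n ℂ) : tensorOne (x + y) = tensorOne x + tensorOne y := by
  ext p q
  simp only [tensorOne, Matrix.of_apply, Matrix.add_apply, add_mul]

lemma tensorOne_smul (r : ℂ) (x : Matrix n n ℂ) : tensorOne (r • x) = r • tensorOne x := by
  ext p q; simp [tensorOne]

lemma tensorOne_zero : tensorOne (0 : Matrix n n ℂ) = 0 := by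
  ext p q; simp [tensorOne]

end Aux

theorem statement19 (V : Matrix (n × n) (n × n) ℂ) (hV : IsMPI V) :
    (∀ a ∈ AR V, oneTensor a * V = V * tensorOne a) ∧
    (∀ a ∈ AR V, ∀ c ∈ CV V, a * c = c * a) := by
  have part1 : ∀ a ∈ AR V, oneTensor a * V = V * tensorOne a := by
    intro a ha
    induction ha using Submodule.span_induction with
    | mem x hx =>
      obtain ⟨ω, rfl⟩ := hx
      exact part1_gen V hV ω
    | zero => simp [oneTensor_zero, tensorOne_zero]
    | add x y hx hy ihx ihy =>
      rw [oneTensor_add, tensorOne_add, add_mul, mul_add, ihx, ihy]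
    | smul r x hx ihx =>
      rw [oneTensor_smul, tensorOne_smul, smul_mul_assoc, mul_smul_comm, ihx]
  refine ⟨part1, fun a ha c hc => ?_⟩
  have h := part1 a ha
  induction hc using Submodule.span_induction with
  | mem x hx =>
    obtain ⟨ω, rfl⟩ := hx
    exact part2_gen V a h ω
  | zero => simp
  | add x y hx hy ihx ihy => rw [mul_add, add_mul, ihx, ihy]
  | smul r x hx ihx => rw [mul_smul_comm, smul_mul_assoc, ihx]

end MPIpaper
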